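/- Let 0 < γ < 1/3 and ρ > 0 small, and let 𝔅↑, 𝔅↓ be balls in ℝ³ of radii k_F↑, k_F↓ ≤ Cρ^{1/3}. Then the absolute value of ∫∫∫ dp dr dr' over {4ρ^{1/3−γ} ≤ |p|} × 𝔅↑ × 𝔅↓ of [1/(λ_{r,p} + λ_{r',−p}) − 1/(2|p|²)] is bounded by C ρ^{7/3+γ}, where λ_{r,p} = |r+p|² − |r|². -/

import Mathlib

open MeasureTheory Metric Set

noncomputable section
abbrev E3 := EuclideanSpace ℝ (Fin 3)

lemma hm_finrank : Module.finrank ℝ E3 = 3 := by simp [finrank_euclideanSpace]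

lemma hm_Smeas (R : ℝ) : MeasurableSet {p : E3 | R ≤ ‖p‖} :=
  (isClosed_le continuous_const continuous_norm).measurableSet

lemma hm_pow4_integrableOn {R : ℝ} (hR : 0 < R) :
    IntegrableOn (fun p : E3 => (‖p‖ ^ 4)⁻¹) {p : E3 | R ≤ ‖p‖} := by
  have h4 : ((Module.finrank ℝ E3 : ℝ)) < 4 := by rw [hm_finrank]; norm_num
  have hint : Integrable (fun x : E3 => (1 + ‖x‖) ^ (-(4:ℝ))) := integrable_one_add_norm h4
  refine Integrable.mono' ((hint.const_mul ((1 + 1/R)^4)).integrableOn) ?_ ?_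
  · exact ((measurable_norm.pow_const 4).inv).aestronglyMeasurable
  · refine (ae_restrict_iff' (hm_Smeas R)).2 (ae_of_all _ ?_)
    intro p hp
    have hp' : R ≤ ‖p‖ := hp
    have hp0 : 0 < ‖p‖ := lt_of_lt_of_le hR hp'
    have h1p : (0:ℝ) < 1 + ‖p‖ := by positivity
    have hrpow : (1 + ‖p‖) ^ (-(4:ℝ)) = ((1 + ‖p‖)^(4:ℕ))⁻¹ := by
      rw [Real.rpow_neg h1p.le, show ((4:ℝ)) = ((4:ℕ):ℝ) by norm_num, Real.rpow_natCast]
    have hmono : (1 + ‖p‖)^(4:ℕ) ≤ ((1 + 1/R) * ‖p‖)^(4:ℕ) := by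
      apply pow_le_pow_left₀ (by positivity)
      have : 1 ≤ ‖p‖ / R := (one_le_div hR).2 hp'
      calc 1 + ‖p‖ ≤ ‖p‖/R + ‖p‖ := by linarith
        _ = (1 + 1/R) * ‖p‖ := by field_simp; ring
    rw [Real.norm_eq_abs, abs_of_nonneg (by positivity), hrpow]
    rw [show (1 + 1/R)^4 * ((1 + ‖p‖)^(4:ℕ))⁻¹ = (1 + 1/R)^4 / (1 + ‖p‖)^(4:ℕ) by ring,
        show (‖p‖^4)⁻¹ = 1 / ‖p‖^4 by ring, div_le_div_iff₀ (by positivity) (by positivity)]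
    calc 1 * (1 + ‖p‖)^4 = (1+‖p‖)^4 := by ring
      _ ≤ ((1 + 1/R) * ‖p‖)^4 := hmono
      _ = (1 + 1/R)^4 * ‖p‖^4 := by ring

lemma hm_pow4_integral {R : ℝ} (hR : 0 < R) :
    ∫ p in {p : E3 | R ≤ ‖p‖}, (‖p‖ ^ 4)⁻¹ =
      3 * (volume (ball (0:E3) 1)).toReal * R⁻¹ := by
  have key := MeasureTheory.integral_fun_norm_addHaar (volume : Measure E3)
    ((Ici R).indicator (fun t : ℝ => (t^4)⁻¹))
  have hL : (fun x : E3 => (Ici R).indicator (fun t : ℝ => (t^4)⁻¹) ‖x‖)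
      = {p : E3 | R ≤ ‖p‖}.indicator (fun p => (‖p‖^4)⁻¹) := by
    funext x
    by_cases h : R ≤ ‖x‖ <;> simp [indicator, h]
  have hIci : Ici R ⊆ Ioi (0:ℝ) := fun x hx => lt_of_lt_of_le hR hx
  have hRHS : ∫ y in Ioi (0:ℝ), y ^ (Module.finrank ℝ E3 - 1) •
      (Ici R).indicator (fun t : ℝ => (t^4)⁻¹) y = R⁻¹ := by
    have h1 : ∀ y : ℝ, y ^ (Module.finrank ℝ E3 - 1) • (Ici R).indicator (fun t : ℝ => (t^4)⁻¹) y
        = (Ici R).indicator (fun t : ℝ => t^2 * (t^4)⁻¹) y := by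
      intro y
      rw [hm_finrank]
      by_cases h : y ∈ Ici R <;> simp [indicator, h, smul_eq_mul]
    simp only [h1]
    rw [setIntegral_indicator measurableSet_Ici,
        inter_eq_self_of_subset_right hIci, integral_Ici_eq_integral_Ioi]
    have hcongr : ∫ y in Ioi R, y^2 * (y^4)⁻¹ = ∫ y in Ioi R, y ^ (-2:ℝ) := by
      apply setIntegral_congr_fun measurableSet_Ioi
      intro y hy
      have hy0 : (0:ℝ) < y := lt_trans hR hy
      show y^2 * (y^4)⁻¹ = y ^ (-2:ℝ)
      rw [Real.rpow_neg hy0.le, show ((2:ℝ)) = ((2:ℕ):ℝ) by norm_num, Real.rpow_natCast]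
      field_simp
    rw [hcongr, integral_Ioi_rpow_of_lt (by norm_num) hR]
    norm_num [Real.rpow_neg_one]
  have hS := hm_Smeas R
  calc ∫ p in {p : E3 | R ≤ ‖p‖}, (‖p‖ ^ 4)⁻¹
      = ∫ x : E3, {p : E3 | R ≤ ‖p‖}.indicator (fun p => (‖p‖^4)⁻¹) x := (integral_indicator hS).symm
    _ = ∫ x : E3, (Ici R).indicator (fun t : ℝ => (t^4)⁻¹) ‖x‖ := by rw [hL]
    _ = 3 * (volume (ball (0:E3) 1)).toReal * R⁻¹ := by
        rw [key, hRHS, hm_finrank]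
        simp only [nsmul_eq_mul, smul_eq_mul, measureReal_def]
        push_cast
        ring

lemma hm_odd (k : ℝ) (p : E3) :
    ∫ x in closedBall (0 : E3) k, (inner ℝ x p : ℝ) = 0 := by
  set B := closedBall (0 : E3) k with hBdef
  have hB : MeasurableSet B := measurableSet_closedBall
  set F : E3 → ℝ := B.indicator (fun x => (inner ℝ x p : ℝ)) with hF
  have h2 : ∀ x, F (-x) = - F x := by
    intro x
    by_cases hx : x ∈ B
    · have hx' : -x ∈ B := by
        simpa [hBdef, mem_closedBall, dist_eq_norm] using hx
      simp [hF, indicator_of_mem, hx, hx', inner_neg_left]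
    · have hx' : -x ∉ B := by
        simp only [hBdef, mem_closedBall, dist_zero_right, norm_neg] at hx ⊢
        exact hx
      simp [hF, indicator_of_notMem, hx, hx']
  have key : ∫ x, F x = - ∫ x, F x := by
    conv_lhs => rw [← integral_neg_eq_self F (volume : Measure E3)]
    simp only [h2, integral_neg]
  have h0 : ∫ x, F x = 0 := by linarith
  rw [← integral_indicator hB]
  exact h0

lemma hm_intOn {X : Type*} [MeasurableSpace X] {μ : Measure X} {A : Set X}
    (hA : MeasurableSet A) (hμ : μ A < ⊤) {f : X → ℝ} (hf : Measurable f)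
    {M : ℝ} (hM : ∀ x ∈ A, |f x| ≤ M) : IntegrableOn f A μ :=
  Integrable.mono' (integrableOn_const hμ.ne) hf.aestronglyMeasurable
    ((ae_restrict_iff' hA).2 (ae_of_all _ (by simpa [Real.norm_eq_abs] using hM)))

lemma hm_inner (p : E3) (kup kdown k : ℝ) (hku0 : 0 ≤ kup) (hku : kup ≤ k)
    (hkd0 : 0 ≤ kdown) (hkd : kdown ≤ k) (hp0 : 0 < ‖p‖) (hpk : 4 * k ≤ ‖p‖) :
    |∫ r in closedBall (0 : E3) kup, ∫ r' in closedBall (0 : E3) kdown,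
        (1 / (‖r + p‖ ^ 2 - ‖r‖ ^ 2 + ‖r' - p‖ ^ 2 - ‖r'‖ ^ 2) - 1 / (2 * ‖p‖ ^ 2))|
      ≤ (volume (closedBall (0:E3) kup)).toReal * (volume (closedBall (0:E3) kdown)).toReal
          * (4 * k ^ 2) * (‖p‖ ^ 4)⁻¹ := by
  have hk0 : 0 ≤ k := le_trans hku0 hku
  set s := closedBall (0 : E3) kup with hsdef
  set t := closedBall (0 : E3) kdown with htdef
  have hP : (0:ℝ) < ‖p‖^2 := by positivity
  set a : E3 × E3 → ℝ := fun z => (inner ℝ z.1 p : ℝ) - (inner ℝ z.2 p : ℝ) with hadef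
  set D : E3 × E3 → ℝ := fun z => ‖z.1 + p‖ ^ 2 - ‖z.1‖ ^ 2 + ‖z.2 - p‖ ^ 2 - ‖z.2‖ ^ 2 with hDdef
  have hD : ∀ z, D z = 2 * ‖p‖^2 + 2 * a z := by
    intro z
    simp only [hDdef, hadef]
    rw [norm_add_sq_real, norm_sub_sq_real]
    ring
  set f : E3 × E3 → ℝ := fun z => 1 / (D z) - 1 / (2 * ‖p‖^2) with hfdef
  set g : E3 × E3 → ℝ := fun z => -(a z) / (2 * (‖p‖^2)^2) with hgdef
  -- membership bounds
  have ha : ∀ z ∈ s ×ˢ t, |a z| ≤ 2 * (k * ‖p‖) := by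
    rintro ⟨z1, z2⟩ hz
    obtain ⟨hz1, hz2⟩ := mem_prod.1 hz
    have h1 : ‖z1‖ ≤ k := le_trans (mem_closedBall_zero_iff.1 hz1) hku
    have h2 : ‖z2‖ ≤ k := le_trans (mem_closedBall_zero_iff.1 hz2) hkd
    have i1 : |(inner ℝ z1 p : ℝ)| ≤ k * ‖p‖ :=
      le_trans (abs_real_inner_le_norm z1 p) (mul_le_mul_of_nonneg_right h1 (norm_nonneg p))
    have i2 : |(inner ℝ z2 p : ℝ)| ≤ k * ‖p‖ :=
      le_trans (abs_real_inner_le_norm z2 p) (mul_le_mul_of_nonneg_right h2 (norm_nonneg p))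
    calc |a (z1, z2)| ≤ |(inner ℝ z1 p : ℝ)| + |(inner ℝ z2 p : ℝ)| := abs_sub _ _
      _ ≤ 2 * (k * ‖p‖) := by linarith
  have hDz : ∀ z ∈ s ×ˢ t, ‖p‖^2 ≤ D z := by
    intro z hz
    have h1 := ha z hz
    have h2 : 4 * k * ‖p‖ ≤ ‖p‖ * ‖p‖ := mul_le_mul_of_nonneg_right hpk (norm_nonneg p)
    have h3 := neg_abs_le (a z)
    rw [hD z]
    nlinarith [sq_nonneg ‖p‖]
  have hst_meas : MeasurableSet (s ×ˢ t) :=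
    measurableSet_closedBall.prod measurableSet_closedBall
  have hst_fin : (volume.prod volume) (s ×ˢ t) < ⊤ := by
    rw [Measure.prod_prod]
    exact ENNReal.mul_lt_top measure_closedBall_lt_top measure_closedBall_lt_top
  -- measurability
  have hDc : Continuous D := by
    apply Continuous.sub
    apply Continuous.add
    apply Continuous.sub
    · exact ((continuous_fst.add continuous_const).norm.pow 2)
    · exact (continuous_fst.norm.pow 2)
    · exact ((continuous_snd.sub continuous_const).norm.pow 2)
    · exact (continuous_snd.norm.pow 2)
  have hfm : Measurable f :=
    (measurable_const.div hDc.measurable).sub measurable_const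
  have hac : Continuous a :=
    (continuous_fst.inner continuous_const).sub (continuous_snd.inner continuous_const)
  have hfi : IntegrableOn f (s ×ˢ t) (volume.prod volume) := by
    apply hm_intOn hst_meas hst_fin hfm (M := 2 / ‖p‖^2)
    intro z hz
    have h1 := hDz z hz
    have hDpos : 0 < D z := lt_of_lt_of_le hP h1
    have e1 : |f z| ≤ |1 / D z| + |1 / (2 * ‖p‖^2)| := abs_sub _ _
    have e2 : |1 / D z| ≤ 1 / ‖p‖^2 := by
      rw [abs_of_nonneg (by positivity)]
      exact one_div_le_one_div_of_le hP h1
    have e3 : |1 / (2 * ‖p‖^2)| = 1 / (2 * ‖p‖^2) := abs_of_nonneg (by positivity)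
    have : 1 / ‖p‖^2 + 1 / (2 * ‖p‖^2) ≤ 2 / ‖p‖^2 := by
      rw [div_add_div _ _ (ne_of_gt hP) (by positivity), div_le_div_iff₀ (by positivity) hP]
      ring_nf
      nlinarith
    linarith
  have hgi : IntegrableOn g (s ×ˢ t) (volume.prod volume) := by
    apply hm_intOn hst_meas hst_fin ((hac.measurable.neg).div measurable_const)
      (M := 2 * (k * ‖p‖) / (2 * (‖p‖^2)^2))
    intro z hz
    have h1 := ha z hz
    show |-a z / (2 * (‖p‖^2)^2)| ≤ _
    rw [abs_div, abs_neg, abs_of_nonneg (by positivity : (0:ℝ) ≤ 2 * (‖p‖^2)^2)]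
    gcongr
  -- pointwise identity and bound for f - g
  have hfg : ∀ z ∈ s ×ˢ t, ‖f z - g z‖ ≤ 4 * k ^ 2 * (‖p‖ ^ 4)⁻¹ := by
    intro z hz
    have hDz' := hDz z hz
    have hDpos : 0 < D z := lt_of_lt_of_le hP hDz'
    have haz := ha z hz
    have hDne : 2 * ‖p‖^2 + 2 * a z ≠ 0 := by rw [← hD z]; exact hDpos.ne'
    have hPne : ‖p‖ ≠ 0 := hp0.ne'
    have hiden : f z - g z = (a z) ^ 2 / ((‖p‖^2)^2 * D z) := by
      show 1 / (D z) - 1 / (2 * ‖p‖^2) - (-(a z) / (2 * (‖p‖^2)^2)) = _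
      rw [hD z]
      have hq : ‖p‖^2 + a z ≠ 0 := by intro h; apply hDne; linarith
      field_simp
      ring
    rw [Real.norm_eq_abs, hiden, abs_of_nonneg (div_nonneg (sq_nonneg _) (by positivity))]
    have hnum : (a z)^2 ≤ 4 * k^2 * ‖p‖^2 := by
      calc (a z)^2 = |a z|^2 := (sq_abs _).symm
        _ ≤ (2 * (k * ‖p‖))^2 := pow_le_pow_left₀ (abs_nonneg _) haz 2
        _ = 4 * k^2 * ‖p‖^2 := by ring
    have hden : ‖p‖^6 ≤ (‖p‖^2)^2 * D z := by
      calc ‖p‖^6 = (‖p‖^2)^2 * ‖p‖^2 := by ring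
        _ ≤ (‖p‖^2)^2 * D z := by gcongr
    calc (a z)^2 / ((‖p‖^2)^2 * D z) ≤ (4 * k^2 * ‖p‖^2) / ‖p‖^6 := by
          apply div_le_div₀ (by positivity) hnum (by positivity) hden
      _ = 4 * k ^ 2 * (‖p‖ ^ 4)⁻¹ := by
          field_simp
  -- assemble
  have e1 : (∫ r in s, ∫ r' in t,
        (1 / (‖r + p‖ ^ 2 - ‖r‖ ^ 2 + ‖r' - p‖ ^ 2 - ‖r'‖ ^ 2) - 1 / (2 * ‖p‖ ^ 2)))
      = ∫ z in s ×ˢ t, f z ∂(volume.prod volume) := (setIntegral_prod f hfi).symm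
  have e2 : ∫ z in s ×ˢ t, g z ∂(volume.prod volume) = 0 := by
    rw [setIntegral_prod g hgi]
    have hinner : ∀ r : E3, (∫ r' in t, g (r, r'))
        = (-(volume t).toReal * (2 * (‖p‖^2)^2)⁻¹) * (inner ℝ r p : ℝ) := by
      intro r
      have hgr : (fun r' : E3 => g (r, r'))
          = fun r' : E3 => (inner ℝ r' p : ℝ) * (2 * (‖p‖^2)^2)⁻¹
              - (inner ℝ r p : ℝ) * (2 * (‖p‖^2)^2)⁻¹ := by
        funext r'
        show -((inner ℝ r p : ℝ) - (inner ℝ r' p : ℝ)) / (2 * (‖p‖^2)^2) = _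
        ring
      rw [hgr]
      have int1 : IntegrableOn (fun r' : E3 => (inner ℝ r' p : ℝ) * (2 * (‖p‖^2)^2)⁻¹) t :=
        (((continuous_id.inner continuous_const).mul continuous_const).continuousOn).integrableOn_compact
          (isCompact_closedBall _ _)
      have int2 : IntegrableOn (fun _ : E3 => (inner ℝ r p : ℝ) * (2 * (‖p‖^2)^2)⁻¹) t :=
        integrableOn_const measure_closedBall_lt_top.ne
      rw [integral_sub int1 int2, integral_mul_const, hm_odd, setIntegral_const, smul_eq_mul, measureReal_def]
      ring
    simp only [hinner]
    rw [integral_const_mul, hm_odd, mul_zero]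
  have e3 : ∫ z in s ×ˢ t, f z ∂(volume.prod volume)
      = ∫ z in s ×ˢ t, (f z - g z) ∂(volume.prod volume) := by
    rw [integral_sub hfi hgi, e2, sub_zero]
  rw [e1, e3, ← Real.norm_eq_abs]
  calc ‖∫ z in s ×ˢ t, (f z - g z) ∂(volume.prod volume)‖
      ≤ (4 * k ^ 2 * (‖p‖ ^ 4)⁻¹) * ((volume.prod volume) (s ×ˢ t)).toReal :=
        by have := norm_setIntegral_le_of_norm_le_const hst_fin hfg; rwa [measureReal_def] at this
    _ = (volume s).toReal * (volume t).toReal * (4 * k ^ 2) * (‖p‖ ^ 4)⁻¹ := by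
        rw [Measure.prod_prod, ENNReal.toReal_mul]
        ring

/-- High-momentum bound: for `0 < γ < 1/3` and Fermi balls of radii `≤ cρ^{1/3}`,
`|∫∫∫ (1/(λ_{r,p}+λ_{r',−p}) − 1/(2|p|²))| ≤ C ρ^{7/3+γ}` over `|p| ≥ 4ρ^{1/3−γ}`. -/
theorem high_momentum_bound (γ : ℝ) (hγ0 : 0 < γ) (hγ : γ < 1/3)
    (c : ℝ) (hc : 0 < c) :
    ∃ C ρ₀ : ℝ, 0 < C ∧ 0 < ρ₀ ∧ ∀ ρ : ℝ, 0 < ρ → ρ ≤ ρ₀ →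
      ∀ kup kdown : ℝ, 0 ≤ kup → kup ≤ c * ρ ^ ((1:ℝ)/3) →
        0 ≤ kdown → kdown ≤ c * ρ ^ ((1:ℝ)/3) →
        |∫ p in {p : EuclideanSpace ℝ (Fin 3) | 4 * ρ ^ ((1:ℝ)/3 - γ) ≤ ‖p‖},
            ∫ r in Metric.closedBall (0 : EuclideanSpace ℝ (Fin 3)) kup,
              ∫ r' in Metric.closedBall (0 : EuclideanSpace ℝ (Fin 3)) kdown,
                (1 / (‖r + p‖ ^ 2 - ‖r‖ ^ 2 + ‖r' - p‖ ^ 2 - ‖r'‖ ^ 2)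
                  - 1 / (2 * ‖p‖ ^ 2))|
          ≤ C * ρ ^ ((7:ℝ)/3 + γ) := by
  set V : ℝ := (volume (ball (0:E3) 1)).toReal with hV
  have hV0 : 0 ≤ V := ENNReal.toReal_nonneg
  refine ⟨3 * V^3 * c^8 + 1, (min 1 c⁻¹) ^ (1/γ), by positivity,
    Real.rpow_pos_of_pos (lt_min one_pos (by positivity)) _, ?_⟩
  intro ρ hρ hρ0 kup kdown hku0 hku hkd0 hkd
  set k : ℝ := c * ρ ^ ((1:ℝ)/3) with hkdef
  set R : ℝ := 4 * ρ ^ ((1:ℝ)/3 - γ) with hRdef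
  have hk0 : 0 ≤ k := by positivity
  have hR0 : 0 < R := by positivity
  -- smallness : 4 * k ≤ R
  have hmin0 : (0:ℝ) ≤ min 1 c⁻¹ := le_min zero_le_one (by positivity)
  have hcγ : c * ρ ^ γ ≤ 1 := by
    have h1 : ρ ^ γ ≤ ((min 1 c⁻¹) ^ (1/γ)) ^ γ :=
      Real.rpow_le_rpow hρ.le hρ0 hγ0.le
    have h2 : ((min 1 c⁻¹) ^ (1/γ)) ^ γ = min 1 c⁻¹ := by
      rw [← Real.rpow_mul hmin0, one_div, inv_mul_cancel₀ hγ0.ne', Real.rpow_one]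
    have h3 : ρ ^ γ ≤ c⁻¹ := le_trans (h1.trans_eq h2) (min_le_right _ _)
    calc c * ρ ^ γ ≤ c * c⁻¹ := mul_le_mul_of_nonneg_left h3 hc.le
      _ = 1 := mul_inv_cancel₀ hc.ne'
  have h4k : 4 * k ≤ R := by
    have hρ13 : (0:ℝ) < ρ ^ ((1:ℝ)/3) := Real.rpow_pos_of_pos hρ _
    have hργ : (0:ℝ) < ρ ^ γ := Real.rpow_pos_of_pos hρ _
    have hsplit : ρ ^ ((1:ℝ)/3 - γ) = ρ ^ ((1:ℝ)/3) * (ρ ^ γ)⁻¹ := by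
      rw [Real.rpow_sub hρ, div_eq_mul_inv]
    have hcinv : c ≤ (ρ ^ γ)⁻¹ := by
      rw [inv_eq_one_div]
      exact (le_div_iff₀ hργ).2 hcγ
    have hkk : c * ρ ^ ((1:ℝ)/3) ≤ ρ ^ ((1:ℝ)/3) * (ρ ^ γ)⁻¹ := by
      rw [mul_comm]
      exact mul_le_mul_of_nonneg_left hcinv hρ13.le
    rw [hkdef, hRdef, hsplit]
    linarith
  set S : Set E3 := {p : E3 | R ≤ ‖p‖} with hSdef
  -- volume bound
  have hvol : ∀ κ : ℝ, 0 ≤ κ → κ ≤ k →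
      (volume (closedBall (0:E3) κ)).toReal ≤ k^3 * V := by
    intro κ hκ0 hκ
    have h1 : (volume (closedBall (0:E3) κ)).toReal ≤ (volume (closedBall (0:E3) k)).toReal :=
      ENNReal.toReal_mono measure_closedBall_lt_top.ne
        (measure_mono (closedBall_subset_closedBall hκ))
    have h2 : (volume (closedBall (0:E3) k)).toReal = k^3 * V := by
      rw [Measure.addHaar_closedBall _ _ hk0, hm_finrank, ENNReal.toReal_mul,
        ENNReal.toReal_ofReal (by positivity)]
    linarith
  set M : ℝ := (k^3 * V) * (k^3 * V) * (4 * k^2) with hM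
  have hM0 : 0 ≤ M := by positivity
  -- pointwise bound
  have hpt : ∀ p ∈ S,
      ‖∫ r in closedBall (0 : E3) kup, ∫ r' in closedBall (0 : E3) kdown,
        (1 / (‖r + p‖ ^ 2 - ‖r‖ ^ 2 + ‖r' - p‖ ^ 2 - ‖r'‖ ^ 2) - 1 / (2 * ‖p‖ ^ 2))‖
      ≤ M * (‖p‖ ^ 4)⁻¹ := by
    intro p hp
    have hpR : R ≤ ‖p‖ := hp
    have hp0 : 0 < ‖p‖ := lt_of_lt_of_le hR0 hpR
    have hpk : 4 * k ≤ ‖p‖ := le_trans h4k hpR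
    rw [Real.norm_eq_abs]
    refine le_trans (hm_inner p kup kdown k hku0 hku hkd0 hkd hp0 hpk) ?_
    have hb1 := hvol kup hku0 hku
    have hb2 := hvol kdown hkd0 hkd
    have hvnn1 : (0:ℝ) ≤ (volume (closedBall (0:E3) kup)).toReal := ENNReal.toReal_nonneg
    have hvnn2 : (0:ℝ) ≤ (volume (closedBall (0:E3) kdown)).toReal := ENNReal.toReal_nonneg
    have : (volume (closedBall (0:E3) kup)).toReal * (volume (closedBall (0:E3) kdown)).toReal
        * (4 * k ^ 2) ≤ M := by
      rw [hM]
      apply mul_le_mul_of_nonneg_right _ (by positivity)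
      exact mul_le_mul hb1 hb2 hvnn2 (by positivity)
    apply mul_le_mul_of_nonneg_right this (by positivity)
  -- main chain
  have hint : Integrable (fun p : E3 => M * (‖p‖ ^ 4)⁻¹) (volume.restrict S) :=
    (hm_pow4_integrableOn hR0).const_mul M
  calc |∫ p in S, ∫ r in closedBall (0 : E3) kup, ∫ r' in closedBall (0 : E3) kdown,
          (1 / (‖r + p‖ ^ 2 - ‖r‖ ^ 2 + ‖r' - p‖ ^ 2 - ‖r'‖ ^ 2) - 1 / (2 * ‖p‖ ^ 2))|
      ≤ ∫ p in S, ‖∫ r in closedBall (0 : E3) kup, ∫ r' in closedBall (0 : E3) kdown,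
          (1 / (‖r + p‖ ^ 2 - ‖r‖ ^ 2 + ‖r' - p‖ ^ 2 - ‖r'‖ ^ 2) - 1 / (2 * ‖p‖ ^ 2))‖ := by
        rw [← Real.norm_eq_abs]
        exact norm_integral_le_integral_norm _
    _ ≤ ∫ p in S, M * (‖p‖ ^ 4)⁻¹ := by
        apply integral_mono_of_nonneg (ae_of_all _ fun p => norm_nonneg _) hint
        exact (ae_restrict_iff' (hm_Smeas R)).2 (ae_of_all _ hpt)
    _ = M * (3 * V * R⁻¹) := by
        rw [integral_const_mul, hm_pow4_integral hR0]
    _ ≤ (3 * V^3 * c^8 + 1) * ρ ^ ((7:ℝ)/3 + γ) := by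
        have hkey : M * (3 * V * R⁻¹) = 3 * V^3 * c^8 * ρ ^ ((7:ℝ)/3 + γ) := by
          have hk8 : k^3 * k^3 * k^2 = c^8 * ρ^((8:ℝ)/3) := by
            have h13 : (ρ ^ ((1:ℝ)/3))^(8:ℕ) = ρ^((8:ℝ)/3) := by
              rw [← Real.rpow_natCast (ρ ^ ((1:ℝ)/3)) 8, ← Real.rpow_mul hρ.le]
              norm_num
            calc k^3*k^3*k^2 = c^8 * (ρ^((1:ℝ)/3))^(8:ℕ) := by rw [hkdef]; ring
              _ = c^8 * ρ^((8:ℝ)/3) := by rw [h13]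
          have hρdiv : ρ^((8:ℝ)/3) * (ρ^((1:ℝ)/3 - γ))⁻¹ = ρ^((7:ℝ)/3 + γ) := by
            rw [← Real.rpow_neg hρ.le, ← Real.rpow_add hρ]
            congr 1
            ring
          have e : M * (3 * V * R⁻¹)
              = 3 * V^3 * (k^3 * k^3 * k^2) * (ρ^((1:ℝ)/3 - γ))⁻¹ := by
            rw [hM, hRdef, mul_inv]
            ring
          rw [e, hk8, show 3*V^3*(c^8*ρ^((8:ℝ)/3))*(ρ^((1:ℝ)/3-γ))⁻¹
              = 3*V^3*c^8*(ρ^((8:ℝ)/3)*(ρ^((1:ℝ)/3-γ))⁻¹) by ring, hρdiv]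
        rw [hkey]
        apply mul_le_mul_of_nonneg_right _ (Real.rpow_nonneg hρ.le _)
        nlinarith [pow_nonneg hV0 3, pow_pos hc 8]
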